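/- Let R and R' be rectangles with vertices (0,0),(a,0),(a,b),(0,b) and (0,0),(a',0),(a',b'),(0,b'), with b'/b = B + O(ε) and a'/a = C for constants B, C > 0, and b ≤ a. Suppose 0 < c < d < b and 0 < c' < d' < b' with c'/c = B + O(ε) and (b'−d')/(b−d) = B + O(ε). Then the piecewise-affine map g : R → R' defined by u = (a'/a)x and, for 0 ≤ y ≤ c, v = y[ (b'/b − c'/c)(x/a) + c'/c ], with analogous formulas on c ≤ y ≤ d and d ≤ y ≤ b, is a quasiconformal mapping with maximal dilatation K(g) ≤ max(C/B, B/C) + O(ε), is affine on all sides of R, and sends (0,c) to (0,c') and (0,d) to (0,d'). -/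

import Mathlib

/-
On each horizontal strip the second coordinate `v` is affine in `y`, with slope interpolating
linearly in `x / a` between `b' / b` and the strip's own ratio `c' / c`, `(d' - c') / (d - c)`
or `(b' - d') / (b - d)`. All four ratios are `B + O(ε)`, the middle one because
`d' - c' = b' - (b' - d') - c'`. Hence `v_y = B + O(ε)` and `v_x = O(ε)`, and as `u = C x`, the
dilatation is at most `(max C v_y + |v_x|)² / (C v_y)`, which is `max (C / B) (B / C) + O(ε)`.
For fixed `x`, `y ↦ v x y` is continuous and piecewise linear with positive slopes, vanishes
at `0` and takes the value `b'` at `b`; so it maps `[0, b]` bijectively onto `[0, b']`, and `g`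
is a bijection of the rectangles.
-/

/-- The quasiconformal dilatation of a (pointwise differentiable) planar map with
partial derivatives `u_x, u_y, v_x, v_y`, computed via
`K = (|f_z| + |f_z̄|)/(|f_z| − |f_z̄|)` with
`|f_z| = √((u_x+v_y)² + (v_x−u_y)²)/2`, `|f_z̄| = √((u_x−v_y)² + (v_x+u_y)²)/2`. -/
noncomputable def dilat (ux uy vx vy : ℝ) : ℝ :=
  (Real.sqrt ((ux + vy) ^ 2 + (vx - uy) ^ 2) + Real.sqrt ((ux - vy) ^ 2 + (vx + uy) ^ 2)) /
    (Real.sqrt ((ux + vy) ^ 2 + (vx - uy) ^ 2) - Real.sqrt ((ux - vy) ^ 2 + (vx + uy) ^ 2))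

open Set

theorem StrictMonoOn.bijOn_Icc {α δ : Type*} [ConditionallyCompleteLinearOrder α]
    [TopologicalSpace α] [OrderTopology α] [DenselyOrdered α] [LinearOrder δ]
    [TopologicalSpace δ] [OrderClosedTopology δ] {f : α → δ} {a b : α} (hab : a ≤ b)
    (hf : StrictMonoOn f (Icc a b)) (hf' : ContinuousOn f (Icc a b)) :
    BijOn f (Icc a b) (Icc (f a) (f b)) :=
  ⟨fun _ hx => ⟨hf.monotoneOn (left_mem_Icc.2 hab) hx hx.1,
      hf.monotoneOn hx (right_mem_Icc.2 hab) hx.2⟩,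
    hf.injOn, intermediate_value_Icc hab hf'⟩

theorem Set.BijOn.prodMk_of_fiberwise {α β γ δ : Type*} {s : Set α} {u : Set β} {t : Set γ}
    {w : Set δ} {f : α → γ} {h : α → β → δ} (hf : BijOn f s t) (hh : ∀ x ∈ s, BijOn (h x) u w) :
    BijOn (fun p : α × β => (f p.1, h p.1 p.2)) (s ×ˢ u) (t ×ˢ w) := by
  refine ⟨fun p hp => ⟨hf.mapsTo hp.1, (hh _ hp.1).mapsTo hp.2⟩, ?_, ?_⟩
  · rintro ⟨x₁, y₁⟩ ⟨hx₁, hy₁⟩ ⟨x₂, y₂⟩ ⟨hx₂, hy₂⟩ heq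
    simp only [Prod.mk.injEq] at heq ⊢
    obtain rfl := hf.injOn hx₁ hx₂ heq.1
    exact ⟨rfl, (hh x₁ hx₁).injOn hy₁ hy₂ heq.2⟩
  · rintro ⟨z, z'⟩ ⟨hz, hz'⟩
    obtain ⟨x, hx, rfl⟩ := hf.surjOn hz
    obtain ⟨y, hy, rfl⟩ := (hh x hx).surjOn hz'
    exact ⟨(x, y), ⟨hx, hy⟩, rfl⟩

noncomputable def threePieceLinear (c d s₁ s₂ s₃ y : ℝ) : ℝ :=
  if y ≤ c then s₁ * y
  else if y ≤ d then s₁ * c + s₂ * (y - c)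
  else s₁ * c + s₂ * (d - c) + s₃ * (y - d)

section ThreePieceLinear

variable {b c d s₁ s₂ s₃ y : ℝ}

theorem threePieceLinear_of_le (hy : y ≤ c) : threePieceLinear c d s₁ s₂ s₃ y = s₁ * y :=
  if_pos hy

theorem threePieceLinear_of_mem_Icc (hy : y ∈ Icc c d) :
    threePieceLinear c d s₁ s₂ s₃ y = s₂ * y + (s₁ - s₂) * c := by
  rcases hy.1.eq_or_lt with rfl | hcy
  · rw [threePieceLinear_of_le le_rfl]; ring
  · rw [threePieceLinear, if_neg hcy.not_ge, if_pos hy.2]; ring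

theorem threePieceLinear_of_ge (hcd : c ≤ d) (hy : d ≤ y) :
    threePieceLinear c d s₁ s₂ s₃ y = s₃ * y + (s₁ * c + s₂ * (d - c) - s₃ * d) := by
  rcases hy.eq_or_lt with rfl | hdy
  · rw [threePieceLinear_of_mem_Icc ⟨hcd, le_rfl⟩]; ring
  · rw [threePieceLinear, if_neg (hcd.trans_lt hdy).not_ge, if_neg hdy.not_ge]; ring

theorem exists_affine_threePieceLinear (hcd : c ≤ d) :
    (∃ α β : ℝ, ∀ y ∈ Iic c, threePieceLinear c d s₁ s₂ s₃ y = α * y + β) ∧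
    (∃ α β : ℝ, ∀ y ∈ Icc c d, threePieceLinear c d s₁ s₂ s₃ y = α * y + β) ∧
    (∃ α β : ℝ, ∀ y ∈ Ici d, threePieceLinear c d s₁ s₂ s₃ y = α * y + β) :=
  ⟨⟨s₁, 0, fun _ hy => by rw [threePieceLinear_of_le hy, add_zero]⟩,
    ⟨_, _, fun _ hy => threePieceLinear_of_mem_Icc hy⟩,
    ⟨_, _, fun _ hy => threePieceLinear_of_ge hcd hy⟩⟩

theorem continuous_threePieceLinear (hcd : c ≤ d) :
    Continuous (threePieceLinear c d s₁ s₂ s₃) := by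
  refine Continuous.if_le (by fun_prop)
    (Continuous.if_le (by fun_prop) (by fun_prop) continuous_id continuous_const ?_)
    continuous_id continuous_const ?_
  · rintro y rfl; ring
  · rintro y rfl; rw [if_pos hcd]; ring

theorem strictMono_threePieceLinear (hcd : c ≤ d) (h₁ : 0 < s₁) (h₂ : 0 < s₂) (h₃ : 0 < s₃) :
    StrictMono (threePieceLinear c d s₁ s₂ s₃) := by
  have affine {s : ℝ} (k : ℝ) (hs : 0 < s) : StrictMono fun y => s * y + k :=
    (strictMono_mul_left_of_pos hs).add_const k
  refine StrictMonoOn.Iic_union_Ici (a := c) ?_ ?_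
  · exact (strictMono_mul_left_of_pos h₁).strictMonoOn _ |>.congr
      fun y hy => (threePieceLinear_of_le hy).symm
  · rw [← Icc_union_Ici_eq_Ici hcd]
    exact StrictMonoOn.union
      (((affine _ h₂).strictMonoOn _).congr fun y hy => (threePieceLinear_of_mem_Icc hy).symm)
      (((affine _ h₃).strictMonoOn _).congr fun y hy => (threePieceLinear_of_ge hcd hy).symm)
      (isGreatest_Icc hcd) isLeast_Ici

theorem bijOn_threePieceLinear {b' : ℝ} (hc : 0 ≤ c) (hcd : c ≤ d) (hdb : d ≤ b)
    (h₁ : 0 < s₁) (h₂ : 0 < s₂) (h₃ : 0 < s₃) (hsum : s₁ * c + s₂ * (d - c) + s₃ * (b - d) = b') :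
    BijOn (threePieceLinear c d s₁ s₂ s₃) (Icc 0 b) (Icc 0 b') := by
  have h := ((strictMono_threePieceLinear hcd h₁ h₂ h₃).strictMonoOn _).bijOn_Icc
    (hc.trans (hcd.trans hdb)) (continuous_threePieceLinear hcd).continuousOn
  rwa [threePieceLinear_of_le hc, mul_zero, threePieceLinear_of_ge hcd hdb,
    show s₃ * b + (s₁ * c + s₂ * (d - c) - s₃ * d) = b' by rw [← hsum]; ring] at h

end ThreePieceLinear

noncomputable def interpSlope (a P Q x : ℝ) : ℝ :=
  (P - Q) * (x / a) + Q

theorem interpSlope_pos {a P Q x : ℝ} (ha : 0 < a) (hP : 0 < P) (hQ : 0 < Q) (hx : x ∈ Icc 0 a) :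
    0 < interpSlope a P Q x := by
  obtain ⟨ht₀, ht₁⟩ := unitInterval.div_mem hx.1 ha.le hx.2
  rw [interpSlope]
  rcases le_total Q P with h | h
  · nlinarith [mul_nonneg (sub_nonneg.2 h) ht₀]
  · nlinarith [mul_nonneg (sub_nonneg.2 h) (sub_nonneg.2 ht₁)]

theorem abs_interpSlope_sub_le {a P Q B η x : ℝ} (ha : 0 < a) (hP : |P - B| ≤ η)
    (hQ : |Q - B| ≤ η) (hx : x ∈ Icc 0 a) : |interpSlope a P Q x - B| ≤ η := by
  obtain ⟨ht₀, ht₁⟩ := unitInterval.div_mem hx.1 ha.le hx.2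
  calc |interpSlope a P Q x - B| = |x / a * (P - B) + (1 - x / a) * (Q - B)| := by
        rw [interpSlope]; ring_nf
    _ ≤ x / a * |P - B| + (1 - x / a) * |Q - B| := by
      refine (abs_add_le _ _).trans_eq ?_
      rw [abs_mul, abs_mul, abs_of_nonneg ht₀, abs_of_nonneg (sub_nonneg.2 ht₁)]
    _ ≤ x / a * η + (1 - x / a) * η := by gcongr
    _ = η := by ring

/-- The second coordinate `v` of the paper's map `g (x, y) = (a' x / a, v x y)` from the
rectangle `[0, a] × [0, b]` onto `[0, a'] × [0, b']`. -/
noncomputable def affineMapV (a b c d b' c' d' x y : ℝ) : ℝ :=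
  let Dm := (d' - c') / (d - c)
  let Em := (b' - d') / (b - d)
  if y ≤ c then y * ((b' / b - c' / c) * (x / a) + c' / c)
  else if y ≤ d then
    y * ((b' / b - Dm) * (x / a) + Dm) + c * ((Dm - c' / c) * (x / a) + c' / c - Dm)
  else b' + (y - b) * ((b' / b - Em) * (x / a) + Em)

section AffineMapV

variable {a b c d b' c' d' : ℝ}

theorem interpSlope_strips_sum (hc : 0 < c) (hcd : c < d) (hdb : d < b) (x : ℝ) :
    interpSlope a (b' / b) (c' / c) x * c +
      interpSlope a (b' / b) ((d' - c') / (d - c)) x * (d - c) +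
      interpSlope a (b' / b) ((b' - d') / (b - d)) x * (b - d) = b' := by
  have hdc : d - c ≠ 0 := (sub_pos.2 hcd).ne'
  have hbd : b - d ≠ 0 := (sub_pos.2 hdb).ne'
  have hb : b ≠ 0 := (hc.trans (hcd.trans hdb)).ne'
  simp only [interpSlope]
  field_simp
  ring

theorem affineMapV_eq_threePieceLinear (hc : 0 < c) (hcd : c < d) (hdb : d < b) (x : ℝ) :
    affineMapV a b c d b' c' d' x =
      threePieceLinear c d (interpSlope a (b' / b) (c' / c) x)
        (interpSlope a (b' / b) ((d' - c') / (d - c)) x)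
        (interpSlope a (b' / b) ((b' - d') / (b - d)) x) := by
  have hsum := interpSlope_strips_sum (a := a) (b' := b') (c' := c') (d' := d') hc hcd hdb x
  funext y
  simp only [affineMapV, threePieceLinear, interpSlope] at hsum ⊢
  split_ifs
  · ring
  · ring
  · linear_combination -hsum

theorem bijOn_affineMap (ha : 0 < a) (ha' : 0 < a') (hc : 0 < c) (hcd : c < d) (hdb : d < b)
    (hc' : 0 < c') (hcd' : c' < d') (hdb' : d' < b') :
    BijOn (fun p : ℝ × ℝ => (a' / a * p.1, affineMapV a b c d b' c' d' p.1 p.2))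
      (Icc 0 a ×ˢ Icc 0 b) (Icc 0 a' ×ˢ Icc 0 b') := by
  have hb : 0 < b := hc.trans (hcd.trans hdb)
  have hscale : BijOn (a' / a * ·) (Icc 0 a) (Icc 0 a') := by
    have := ((strictMono_mul_left_of_pos (div_pos ha' ha)).strictMonoOn _).bijOn_Icc ha.le
      (continuous_const_mul _).continuousOn
    rwa [mul_zero, div_mul_cancel₀ _ ha.ne'] at this
  refine hscale.prodMk_of_fiberwise fun x hx => ?_
  rw [affineMapV_eq_threePieceLinear hc hcd hdb]
  have hP : 0 < b' / b := div_pos (hc'.trans (hcd'.trans hdb')) hb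
  exact bijOn_threePieceLinear hc.le hcd.le hdb.le
    (interpSlope_pos ha hP (div_pos hc' hc) hx)
    (interpSlope_pos ha hP (div_pos (sub_pos.2 hcd') (sub_pos.2 hcd)) hx)
    (interpSlope_pos ha hP (div_pos (sub_pos.2 hdb') (sub_pos.2 hdb)) hx)
    (interpSlope_strips_sum hc hcd hdb x)

theorem affineMapV_zero_left (hc : c ≠ 0) : affineMapV a b c d b' c' d' 0 c = c' := by
  simp only [affineMapV, le_rfl, if_true, zero_div, mul_zero, zero_add]
  exact mul_div_cancel₀ _ hc

theorem affineMapV_zero_mid (hc : 0 < c) (hcd : c < d) :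
    affineMapV a b c d b' c' d' 0 d = d' := by
  have hdc : d - c ≠ 0 := (sub_pos.2 hcd).ne'
  simp only [affineMapV, if_neg hcd.not_ge, le_rfl, if_true, zero_div, mul_zero, zero_add]
  field_simp
  ring

theorem affineMapV_apply_zero (hc : 0 ≤ c) (x : ℝ) : affineMapV a b c d b' c' d' x 0 = 0 := by
  simp [affineMapV, hc]

theorem affineMapV_apply_top (hcd : c < d) (hdb : d < b) (x : ℝ) :
    affineMapV a b c d b' c' d' x b = b' := by
  simp [affineMapV, hdb.not_ge, (hcd.trans hdb).not_ge]

theorem exists_affine_affineMapV (hc : 0 < c) (hcd : c < d) (hdb : d < b) (x : ℝ) :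
    (∃ α β : ℝ, ∀ y ∈ Icc 0 c, affineMapV a b c d b' c' d' x y = α * y + β) ∧
    (∃ α β : ℝ, ∀ y ∈ Icc c d, affineMapV a b c d b' c' d' x y = α * y + β) ∧
    (∃ α β : ℝ, ∀ y ∈ Icc d b, affineMapV a b c d b' c' d' x y = α * y + β) := by
  obtain ⟨⟨α₁, β₁, h₁⟩, h₂, ⟨α₃, β₃, h₃⟩⟩ := exists_affine_threePieceLinear
    (s₁ := interpSlope a (b' / b) (c' / c) x) (s₂ := interpSlope a (b' / b) ((d' - c') / (d - c)) x)
    (s₃ := interpSlope a (b' / b) ((b' - d') / (b - d)) x) hcd.le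
  rw [affineMapV_eq_threePieceLinear hc hcd hdb]
  exact ⟨⟨α₁, β₁, fun y hy => h₁ y hy.2⟩, h₂, ⟨α₃, β₃, fun y hy => h₃ y hy.1⟩⟩

end AffineMapV

theorem Real.sqrt_sq_add_sq_le (p q : ℝ) : √(p ^ 2 + q ^ 2) ≤ |p| + |q| :=
  (Real.sqrt_le_left (by positivity)).2 <| by
    nlinarith [sq_abs p, sq_abs q, mul_nonneg (abs_nonneg p) (abs_nonneg q)]

theorem dilat_le_sq_div {C vx vy : ℝ} (hC : 0 < C) (hvy : 0 < vy) :
    dilat C 0 vx vy ≤ (max C vy + |vx|) ^ 2 / (C * vy) := by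
  set S := √((C + vy) ^ 2 + vx ^ 2)
  set T := √((C - vy) ^ 2 + vx ^ 2)
  have hdil : dilat C 0 vx vy = (S + T) / (S - T) := by
    simp only [dilat, S, T, add_zero, sub_zero]
  have hS : S ^ 2 = (C + vy) ^ 2 + vx ^ 2 := Real.sq_sqrt (by positivity)
  have hT : T ^ 2 = (C - vy) ^ 2 + vx ^ 2 := Real.sq_sqrt (by positivity)
  -- `S² - T²` is four times the Jacobian `C vy`, so `dilat = (S + T)² / (4 C vy)`
  have hjac : (S - T) * (S + T) = 4 * C * vy := by linear_combination hS - hT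
  have hS_pos : 0 < S := Real.sqrt_pos.2 (by positivity)
  have hT_nonneg : 0 ≤ T := Real.sqrt_nonneg _
  have hST : 0 < S - T := by nlinarith
  have hsum : S + T ≤ 2 * (max C vy + |vx|) := by
    have hS' := Real.sqrt_sq_add_sq_le (C + vy) vx
    have hT' := Real.sqrt_sq_add_sq_le (C - vy) vx
    rw [abs_of_pos (by positivity)] at hS'
    rcases le_total C vy with h | h
    · rw [abs_of_nonpos (sub_nonpos.2 h), max_eq_right h] at *; linarith
    · rw [abs_of_nonneg (sub_nonneg.2 h), max_eq_left h] at *; linarith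
  calc dilat C 0 vx vy = (S + T) ^ 2 / (4 * C * vy) := by
        rw [hdil, ← hjac]; field_simp
    _ ≤ (2 * (max C vy + |vx|)) ^ 2 / (4 * C * vy) := by gcongr
    _ = (max C vy + |vx|) ^ 2 / (C * vy) := by field_simp; ring

theorem max_div_div_eq_sq_div {C B : ℝ} (hC : 0 < C) (hB : 0 < B) :
    max (C / B) (B / C) = max C B ^ 2 / (C * B) := by
  rcases le_total C B with h | h
  · rw [max_eq_right h, max_eq_right ((div_le_div_iff₀ hB hC).2 (by nlinarith))]
    field_simp
  · rw [max_eq_left h, max_eq_left ((div_le_div_iff₀ hC hB).2 (by nlinarith))]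
    field_simp

theorem sq_div_le_max_div_add {C B δ vx vy : ℝ} (hC : 0 < C) (hB : 0 < B) (hδ : 2 * δ ≤ B)
    (hvx : |vx| ≤ δ) (hvy : |vy - B| ≤ δ) :
    (max C vy + |vx|) ^ 2 / (C * vy) ≤
      max (C / B) (B / C) + 2 * (max C B ^ 2 + 4 * B * max C B + 2 * B ^ 2) / (C * B ^ 2) * δ := by
  rw [max_div_div_eq_sq_div hC hB]
  set M := max C B
  obtain ⟨hvy₁, hvy₂⟩ := abs_le.mp hvy
  have hδ₀ : 0 ≤ δ := (abs_nonneg vx).trans hvx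
  have hM : B ≤ M := le_max_right C B
  have hvy₀ : 0 < vy := by linarith
  have hnum : max C vy + |vx| ≤ M + 2 * δ := by
    have : max C vy ≤ M + δ := max_le (by linarith [le_max_left C B]) (by linarith)
    linarith
  rw [div_le_iff₀ (by positivity)]
  have key : (M + 2 * δ) ^ 2 * B ^ 2 ≤
      (M ^ 2 * B + 2 * (M ^ 2 + 4 * B * M + 2 * B ^ 2) * δ) * vy := by
    nlinarith [mul_nonneg (mul_nonneg hδ₀ (sq_nonneg (M + 2 * B))) (by linarith : 0 ≤ B - 2 * δ),
      mul_nonneg (by positivity : 0 ≤ M ^ 2 * B + 2 * (M ^ 2 + 4 * B * M + 2 * B ^ 2) * δ)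
        (by linarith : 0 ≤ vy - (B - δ))]
  calc (max C vy + |vx|) ^ 2 ≤ (M + 2 * δ) ^ 2 := by gcongr
    _ ≤ (M ^ 2 * B + 2 * (M ^ 2 + 4 * B * M + 2 * B ^ 2) * δ) * vy / B ^ 2 := by
      rw [le_div_iff₀ (by positivity)]; exact key
    _ = _ := by field_simp

theorem exists_dilat_le_max_div_add {C B : ℝ} (hC : 0 < C) (hB : 0 < B) :
    ∃ K > 0, ∀ δ vx vy : ℝ, 2 * δ ≤ B → |vx| ≤ δ → |vy - B| ≤ δ →
      dilat C 0 vx vy ≤ max (C / B) (B / C) + K * δ := by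
  refine ⟨2 * (max C B ^ 2 + 4 * B * max C B + 2 * B ^ 2) / (C * B ^ 2), by positivity,
    fun δ vx vy hδ hvx hvy => ?_⟩
  have hvy₀ : 0 < vy := by linarith [(abs_le.mp hvy).1]
  exact (dilat_le_sq_div hC hvy₀).trans (sq_div_le_max_div_add hC hB hδ hvx hvy)

theorem abs_sub_mul_le {P Q B η t : ℝ} (hP : |P - B| ≤ η) (hQ : |Q - B| ≤ η) (ht : |t| ≤ 1) :
    |(P - Q) * t| ≤ 2 * η := by
  have hPQ : |P - Q| ≤ 2 * η := (abs_sub_le P B Q).trans (by rw [abs_sub_comm B Q]; linarith)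
  rw [abs_mul]
  nlinarith [abs_nonneg (P - Q), abs_nonneg t]

theorem exists_dilat_strips_le {a b c d C B : ℝ} (ha : 0 < a) (hc : 0 < c) (hcd : c ≤ d)
    (hdb : d ≤ b) (hba : b ≤ a) (hC : 0 < C) (hB : 0 < B) :
    ∃ K > 0, ∀ η P Q D E : ℝ, 8 * η ≤ B →
      |P - B| ≤ η → |Q - B| ≤ η → |D - B| ≤ η → |E - B| ≤ η →
      (∀ x ∈ Icc 0 a, ∀ y ∈ Icc 0 c,
        dilat C 0 ((P - Q) * (y / a)) (interpSlope a P Q x) ≤ max (C / B) (B / C) + K * η) ∧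
      (∀ x ∈ Icc 0 a, ∀ y ∈ Icc c d,
        dilat C 0 ((P - D) * (y / a) + c * (D - Q) / a) (interpSlope a P D x) ≤
          max (C / B) (B / C) + K * η) ∧
      (∀ x ∈ Icc 0 a, ∀ y ∈ Icc d b,
        dilat C 0 ((y - b) * (P - E) / a) (interpSlope a P E x) ≤
          max (C / B) (B / C) + K * η) := by
  obtain ⟨K, hK, hdil⟩ := exists_dilat_le_max_div_add hC hB
  refine ⟨4 * K, by positivity, fun η P Q D E hη hP hQ hD hE => ?_⟩
  have hdil' (vx vy : ℝ) (hvx : |vx| ≤ 4 * η) (hvy : |vy - B| ≤ 4 * η) :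
      dilat C 0 vx vy ≤ max (C / B) (B / C) + 4 * K * η :=
    (hdil _ _ _ (by linarith) hvx hvy).trans_eq (by ring)
  have hslope (R : ℝ) (hR : |R - B| ≤ η) (x : ℝ) (hx : x ∈ Icc 0 a) :
      |interpSlope a P R x - B| ≤ 4 * η :=
    (abs_interpSlope_sub_le ha hP hR hx).trans (by linarith [(abs_nonneg _).trans hP])
  have hunit (y : ℝ) (hy : |y| ≤ a) : |y / a| ≤ 1 := by
    rwa [abs_div, abs_of_pos ha, div_le_one ha]
  refine ⟨fun x hx y hy => hdil' _ _ ?_ (hslope Q hQ x hx),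
    fun x hx y hy => hdil' _ _ ?_ (hslope D hD x hx),
    fun x hx y hy => hdil' _ _ ?_ (hslope E hE x hx)⟩
  · refine (abs_sub_mul_le hP hQ (hunit y ?_)).trans (by linarith [(abs_nonneg _).trans hP])
    exact abs_le.2 ⟨by linarith [hy.1], by linarith [hy.2]⟩
  · rw [show c * (D - Q) / a = (D - Q) * (c / a) by ring]
    calc _ ≤ _ := abs_add_le _ _
      _ ≤ 2 * η + 2 * η := add_le_add
          (abs_sub_mul_le hP hD (hunit y (abs_le.2 ⟨by linarith [hy.1], by linarith [hy.2]⟩)))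
          (abs_sub_mul_le hD hQ (hunit c (abs_le.2 ⟨by linarith, by linarith⟩)))
      _ = 4 * η := by ring
  · rw [show (y - b) * (P - E) / a = (P - E) * ((y - b) / a) by ring]
    refine (abs_sub_mul_le hP hE (hunit _ ?_)).trans (by linarith [(abs_nonneg _).trans hP])
    exact abs_le.2 ⟨by linarith [hy.1], by linarith [hy.2]⟩

theorem abs_div_sub_le_of_split {b c d b' c' d' B η : ℝ} (hc : 0 < c) (hcd : c < d) (hdb : d < b)
    (hb' : |b' / b - B| ≤ η) (hc' : |c' / c - B| ≤ η) (hd' : |(b' - d') / (b - d) - B| ≤ η) :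
    |(d' - c') / (d - c) - B| ≤ 2 * b / (d - c) * η := by
  have hdc : 0 < d - c := sub_pos.2 hcd
  have hbd : 0 < b - d := sub_pos.2 hdb
  have hb : 0 < b := hc.trans (hcd.trans hdb)
  have hη : 0 ≤ η := (abs_nonneg _).trans hb'
  have key : (d' - c') / (d - c) - B = (b * (b' / b - B) - (b - d) * ((b' - d') / (b - d) - B)
      - c * (c' / c - B)) / (d - c) := by
    field_simp
    ring
  rw [key, abs_div, abs_of_pos hdc, div_mul_eq_mul_div, div_le_div_iff_of_pos_right hdc]
  calc _ ≤ |b * (b' / b - B)| + |(b - d) * ((b' - d') / (b - d) - B)| + |c * (c' / c - B)| :=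
        (abs_sub _ _).trans (by gcongr; exact abs_sub _ _)
    _ = b * |b' / b - B| + (b - d) * |(b' - d') / (b - d) - B| + c * |c' / c - B| := by
        rw [abs_mul, abs_mul, abs_mul, abs_of_pos hb, abs_of_pos hbd, abs_of_pos hc]
    _ ≤ b * η + (b - d) * η + c * η := by gcongr
    _ ≤ 2 * b * η := by nlinarith

/-- Affine Mapping Lemma: under the stated ratio hypotheses
(with O(ε)-constant C₀), the piecewise-affine map g : R → R' (given by the explicit
formulas of the paper) is a bijection of the rectangles, sends (0,c) to (0,c') and
(0,d) to (0,d'), is affine on all sides, and its pointwise dilatation, computed from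
the explicit partial derivatives on each of the three horizontal strips, is at most
max(C/B, B/C) + O(ε). -/
theorem stmt_10 (a b c d B C C₀ : ℝ) (ha : 0 < a) (hb : 0 < b) (hB : 0 < B) (hC : 0 < C)
    (hC₀ : 0 < C₀) (hc : 0 < c) (hcd : c < d) (hdb : d < b) (hba : b ≤ a) :
    ∃ C' > 0, ∃ ε₀ > 0, ∀ ε : ℝ, 0 < ε → ε ≤ ε₀ → ∀ a' b' c' d' : ℝ,
      0 < a' → 0 < c' → c' < d' → d' < b' →
      a' / a = C →
      |b' / b - B| ≤ C₀ * ε →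
      |c' / c - B| ≤ C₀ * ε →
      |(b' - d') / (b - d) - B| ≤ C₀ * ε →
      let Dm : ℝ := (d' - c') / (d - c)
      let Em : ℝ := (b' - d') / (b - d)
      let v : ℝ → ℝ → ℝ := fun x y =>
        if y ≤ c then y * ((b' / b - c' / c) * (x / a) + c' / c)
        else if y ≤ d then
          y * ((b' / b - Dm) * (x / a) + Dm) + c * ((Dm - c' / c) * (x / a) + c' / c - Dm)
        else b' + (y - b) * ((b' / b - Em) * (x / a) + Em)
      let g : ℝ × ℝ → ℝ × ℝ := fun p => (a' / a * p.1, v p.1 p.2)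
      -- g is a homeomorphism of the rectangles (a continuous bijection)
      (Set.BijOn g (Set.Icc 0 a ×ˢ Set.Icc 0 b) (Set.Icc 0 a' ×ˢ Set.Icc 0 b')) ∧
      -- g sends P₁ = (0,c) to P₁' = (0,c') and P₂ = (0,d) to P₂' = (0,d')
      g (0, c) = (0, c') ∧ g (0, d) = (0, d') ∧
      -- g is affine on all sides of R
      (∃ α β : ℝ, ∀ x ∈ Set.Icc 0 a, v x 0 = α * x + β) ∧
      (∃ α β : ℝ, ∀ x ∈ Set.Icc 0 a, v x b = α * x + β) ∧
      (∀ x ∈ ({0, a} : Set ℝ),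
        (∃ α β : ℝ, ∀ y ∈ Set.Icc 0 c, v x y = α * y + β) ∧
        (∃ α β : ℝ, ∀ y ∈ Set.Icc c d, v x y = α * y + β) ∧
        (∃ α β : ℝ, ∀ y ∈ Set.Icc d b, v x y = α * y + β)) ∧
      -- dilatation bound on the strip 0 ≤ y ≤ c
      (∀ x ∈ Set.Icc 0 a, ∀ y ∈ Set.Icc 0 c,
        dilat (a' / a) 0 ((b' / b - c' / c) * (y / a))
            ((b' / b - c' / c) * (x / a) + c' / c) ≤ max (C / B) (B / C) + C' * ε) ∧
      -- dilatation bound on the strip c ≤ y ≤ d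
      (∀ x ∈ Set.Icc 0 a, ∀ y ∈ Set.Icc c d,
        dilat (a' / a) 0 ((b' / b - Dm) * (y / a) + c * (Dm - c' / c) / a)
            ((b' / b - Dm) * (x / a) + Dm) ≤ max (C / B) (B / C) + C' * ε) ∧
      -- dilatation bound on the strip d ≤ y ≤ b
      (∀ x ∈ Set.Icc 0 a, ∀ y ∈ Set.Icc d b,
        dilat (a' / a) 0 ((y - b) * (b' / b - Em) / a)
            ((b' / b - Em) * (x / a) + Em) ≤ max (C / B) (B / C) + C' * ε) := by
  have hdc : 0 < d - c := sub_pos.2 hcd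
  set κ := 2 * b / (d - c) * C₀
  have hC₀κ : C₀ ≤ κ := le_mul_of_one_le_left hC₀.le ((one_le_div hdc).2 (by linarith))
  obtain ⟨K, hK, hstrips⟩ := exists_dilat_strips_le ha hc hcd.le hdb.le hba hC hB
  refine ⟨K * κ, by positivity, B / (8 * κ), by positivity, ?_⟩
  intro ε hε hεε a' b' c' d' ha' hc' hcd' hdb' haC hP hQ hE
  subst haC
  have hκ (r : ℝ) (hr : |r - B| ≤ C₀ * ε) : |r - B| ≤ κ * ε :=
    hr.trans (mul_le_mul_of_nonneg_right hC₀κ hε.le)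
  have hD : |(d' - c') / (d - c) - B| ≤ κ * ε :=
    (abs_div_sub_le_of_split hc hcd hdb hP hQ hE).trans_eq (mul_assoc _ _ _).symm
  have h8 : 8 * (κ * ε) ≤ B := by
    have := (le_div_iff₀ (by positivity)).1 hεε
    linarith
  exact ⟨bijOn_affineMap ha ha' hc hcd hdb hc' hcd' hdb',
    Prod.ext (mul_zero _) (affineMapV_zero_left hc.ne'),
    Prod.ext (mul_zero _) (affineMapV_zero_mid hc hcd),
    ⟨0, 0, fun x _ => (affineMapV_apply_zero hc.le x).trans (by ring)⟩,
    ⟨0, b', fun x _ => (affineMapV_apply_top hcd hdb x).trans (by ring)⟩,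
    fun x _ => exists_affine_affineMapV hc hcd hdb x,
    by simp only [mul_assoc]; exact hstrips _ _ _ _ _ h8 (hκ _ hP) (hκ _ hQ) hD (hκ _ hE)⟩
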